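/- For bounded R^d-valued random vectors X and Y, the following are equivalent: (1) X ⪰ Y and E[φ(X)] < E[φ(Y)] for SOME convex φ; (2) X ⪰ Y and L(X) ≠ L(Y); (3) X ⪰ Y and E[φ(X)] < E[φ(Y)] for EVERY strictly convex continuous φ. -/

import Mathlib

open MeasureTheory

/-- Concave-order dominance: X ⪰ Y iff E[φ(X)] ≤ E[φ(Y)] for every convex φ. -/
def ConcaveDom {Ω : Type*} [MeasurableSpace Ω] (μ : Measure Ω) {d : ℕ}
    (X Y : Ω → (Fin d → ℝ)) : Prop :=
  ∀ φ : (Fin d → ℝ) → ℝ, ConvexOn ℝ Set.univ φ →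
    ∫ ω, φ (X ω) ∂μ ≤ ∫ ω, φ (Y ω) ∂μ

/-
If `X ⪰ Y` and `E φ(X) = E φ(Y)` for one strictly convex `φ`, then `L(X) = L(Y)`. Fix a bounded
Lipschitz `f` and `ε > 0`. On a ball containing the values of `X`, strict convexity puts `φ` a
uniform amount `2m` above its tangent planes at distance `≥ r`, and for small `t > 0` this gap
absorbs the oscillation of `t f`. Hence the upper envelope `F` of the affine functions
`y ↦ φ x + l_x (y - x) + t f x - t ε` (`x` in the ball, `l_x` a subgradient) is convex, lies below
`φ + t f`, and above `φ + t f - t ε` on the ball. Testing `X ⪰ Y` on `F` gives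
`E f(X) ≤ E f(Y) + ε`; applied to `±f`, the two laws agree on all bounded Lipschitz functions.
The other implications use the strictly convex test function `y ↦ ∑ i, y i ^ 2`.
-/

open Set Metric Filter Topology

theorem ConvexOn.ciSup {F : Type*} [AddCommGroup F] [Module ℝ F] {ι : Type*} [Nonempty ι]
    {s : Set F} {f : ι → F → ℝ} (hf : ∀ i, ConvexOn ℝ s (f i))
    (hbdd : ∀ x ∈ s, BddAbove (range fun i => f i x)) :
    ConvexOn ℝ s fun x => ⨆ i, f i x := by
  refine ⟨(hf (Classical.arbitrary ι)).1, fun x hx y hy a b ha hb hab => ciSup_le fun i => ?_⟩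
  dsimp only
  calc f i (a • x + b • y) ≤ a • f i x + b • f i y := (hf i).2 hx hy ha hb hab
    _ ≤ a • (⨆ i, f i x) + b • ⨆ i, f i y := by
      gcongr <;> exact le_ciSup (hbdd _ ‹_›) i

section Convex

variable {E : Type*} [NormedAddCommGroup E] [NormedSpace ℝ E] {φ : E → ℝ}

theorem ConvexOn.exists_subgradient (hφ : ConvexOn ℝ univ φ) (hφc : Continuous φ) (x : E) :
    ∃ l : E →L[ℝ] ℝ, ∀ y, φ x + l (y - x) ≤ φ y := by
  have hopen : IsOpen {p : E × ℝ | p.1 ∈ univ ∧ φ p.1 < p.2} := by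
    simpa using isOpen_lt (hφc.comp continuous_fst) continuous_snd
  obtain ⟨f, hf⟩ := geometric_hahn_banach_point_open hφ.convex_strict_epigraph hopen
    (x := (x, φ x)) (by simp)
  set β := f (0, 1)
  have hsplit : ∀ z s, f (z, s) = f (z, 0) + s * β := fun z s => by
    rw [show ((z, s) : E × ℝ) = (z, 0) + s • (0, 1) by simp, map_add, map_smul, smul_eq_mul]
  have hβ : 0 < β := by
    have := hf (x, φ x + 1) (by simp)
    rw [hsplit x, hsplit x (φ x + 1)] at this
    linarith
  refine ⟨-β⁻¹ • f.comp (.inl ℝ E ℝ), fun z => ?_⟩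
  have hcmp : f (x, 0) + φ x * β ≤ f (z, 0) + φ z * β := le_of_forall_pos_lt_add fun ε hε => by
    have := hf (z, φ z + ε / β) (by simpa using div_pos hε hβ)
    rw [hsplit x, hsplit z, add_mul, div_mul_cancel₀ _ hβ.ne'] at this
    linarith
  have hsub : f (z - x, 0) = f (z, 0) - f (x, 0) := by
    rw [← map_sub, Prod.mk_sub_mk, sub_zero]
  have : φ x - φ z ≤ β⁻¹ * (f (z, 0) - f (x, 0)) := by
    rw [le_inv_mul_iff₀ hβ]
    linarith
  simp only [smul_apply, ContinuousLinearMap.comp_apply,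
    ContinuousLinearMap.inl_apply, hsub, smul_eq_mul]
  linarith

theorem StrictConvexOn.exists_pos_midpoint_gap [ProperSpace E] (hφ : StrictConvexOn ℝ univ φ)
    (hφc : Continuous φ) (R : ℝ) {r : ℝ} (hr : 0 < r) :
    ∃ m > 0, ∀ x ∈ closedBall (0 : E) R, ∀ v ∈ sphere (0 : E) r,
      φ (x + (2⁻¹ : ℝ) • v) + m ≤ (φ x + φ (x + v)) / 2 := by
  have hpos : ∀ p ∈ closedBall (0 : E) R ×ˢ sphere (0 : E) r,
      0 < (φ p.1 + φ (p.1 + p.2)) / 2 - φ (p.1 + (2⁻¹ : ℝ) • p.2) := by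
    rintro ⟨x, v⟩ ⟨-, hv⟩
    have hv0 : v ≠ 0 := ne_zero_of_mem_sphere hr.ne' ⟨v, hv⟩
    have := hφ.2 (mem_univ x) (mem_univ (x + v)) (by simpa using hv0)
      (by norm_num : (0 : ℝ) < 2⁻¹) (by norm_num : (0 : ℝ) < 2⁻¹) (by norm_num)
    rw [show (2⁻¹ : ℝ) • x + (2⁻¹ : ℝ) • (x + v) = x + (2⁻¹ : ℝ) • v by module] at this
    simp only [smul_eq_mul] at this
    linarith
  obtain ⟨m, hm, h⟩ := ((isCompact_closedBall (0 : E) R).prod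
    (isCompact_sphere (0 : E) r)).exists_forall_le' (by fun_prop) hpos
  exact ⟨m, hm, fun x hx v hv => by linarith [h (x, v) ⟨hx, hv⟩]⟩

theorem ConvexOn.add_le_of_midpoint_gap (hφ : ConvexOn ℝ univ φ) {x : E} {l : E →L[ℝ] ℝ}
    (hl : ∀ y, φ x + l (y - x) ≤ φ y) {r m : ℝ} (hr : 0 < r) (hm : 0 ≤ m)
    (hgap : ∀ w ∈ sphere (0 : E) r, φ (x + (2⁻¹ : ℝ) • w) + m ≤ (φ x + φ (x + w)) / 2)
    {v : E} (hv : r ≤ ‖v‖) : φ x + l v + 2 * m ≤ φ (x + v) := by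
  have hv0 : 0 < ‖v‖ := hr.trans_le hv
  set θ := r / ‖v‖
  have hθ0 : 0 < θ := by positivity
  have hθ1 : θ ≤ 1 := div_le_one_of_le₀ hv (norm_nonneg v)
  have hw : θ • v ∈ sphere (0 : E) r := by
    rw [mem_sphere_zero_iff_norm, norm_smul, Real.norm_of_nonneg hθ0.le,
      div_mul_cancel₀ _ hv0.ne']
  have hsupp := hl (x + (2⁻¹ : ℝ) • θ • v)
  rw [add_sub_cancel_left, map_smul, map_smul, smul_eq_mul, smul_eq_mul] at hsupp
  have hchord := hφ.2 (mem_univ x) (mem_univ (x + v)) (by linarith : 0 ≤ 1 - θ) hθ0.le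
    (by ring)
  rw [show (1 - θ) • x + θ • (x + v) = x + θ • v by module, smul_eq_mul, smul_eq_mul] at hchord
  have := hgap _ hw
  nlinarith

theorem StrictConvexOn.exists_convexOn_sandwich [FiniteDimensional ℝ E]
    (hφ : StrictConvexOn ℝ univ φ) {f : E → ℝ} {L : NNReal} (hfL : LipschitzWith L f) {C : ℝ}
    (hfC : ∀ x y, dist (f x) (f y) ≤ C) {R ε : ℝ} (hR : 0 ≤ R) (hε : 0 < ε) :
    ∃ t > 0, ∃ F : E → ℝ, ConvexOn ℝ univ F ∧ (∀ y, F y ≤ φ y + t * f y) ∧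
      ∀ x ∈ closedBall (0 : E) R, φ x + t * f x - t * ε ≤ F x := by
  have hφc : Continuous φ := hφ.convexOn.locallyLipschitz.continuous
  choose l hl using hφ.convexOn.exists_subgradient hφc
  set r := ε / (L + 1)
  have hr : 0 < r := by positivity
  obtain ⟨m, hm, hgap⟩ := hφ.exists_pos_midpoint_gap hφc R hr
  have hC : 0 ≤ C := (dist_nonneg).trans (hfC 0 0)
  set t := 2 * m / (C + 1)
  have ht : 0 < t := by positivity
  set A : E → E → ℝ := fun x y => φ x + l x (y - x) + t * f x - t * ε
  -- Near `x`, the Lipschitz bound costs at most `t * ε`; far from `x`, the gap `2 * m` below the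
  -- tangent plane absorbs the oscillation `t * C` of `t * f`.
  have hA : ∀ x ∈ closedBall (0 : E) R, ∀ y, A x y ≤ φ y + t * f y := by
    intro x hx y
    rcases le_or_gt r ‖y - x‖ with hfar | hnear
    · have hbreg := hφ.convexOn.add_le_of_midpoint_gap (hl x) hr hm.le (hgap x hx) hfar
      rw [add_sub_cancel] at hbreg
      have : t * (f x - f y) ≤ 2 * m := calc
        t * (f x - f y) ≤ t * C := by gcongr; exact (le_abs_self _).trans (hfC x y)
        _ ≤ 2 * m := by rw [div_mul_eq_mul_div, div_le_iff₀ (by positivity)]; nlinarith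
      simp only [A]
      nlinarith
    · have : f x - f y ≤ ε := calc
        f x - f y ≤ L * ‖y - x‖ := by
          rw [← dist_eq_norm']
          exact (le_abs_self _).trans (hfL.dist_le_mul x y)
        _ ≤ (L + 1) * r := by gcongr; linarith
        _ = ε := mul_div_cancel₀ _ (by positivity)
      simp only [A]
      nlinarith [hl x y]
  have hbdd : ∀ y, BddAbove (range fun x : closedBall (0 : E) R => A x y) :=
    fun y => ⟨φ y + t * f y, by rintro _ ⟨x, rfl⟩; exact hA x x.2 y⟩
  have : Nonempty (closedBall (0 : E) R) := (nonempty_closedBall.2 hR).to_subtype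
  refine ⟨t, ht, fun y => ⨆ x : closedBall (0 : E) R, A x y, ?_,
    fun y => ciSup_le fun x => hA x x.2 y, fun x hx => ?_⟩
  · refine ConvexOn.ciSup (fun x => ?_) fun y _ => hbdd y
    have hAff : A x = fun y => l x y + (φ x - l x x + t * f x - t * ε) := by
      ext y
      simp only [A, map_sub]
      ring
    rw [hAff]
    exact ((l x).toLinearMap.convexOn convex_univ).add_const _
  · simpa [A] using le_ciSup (hbdd x) ⟨x, hx⟩

end Convex

theorem StrictConvexOn.sum_comp_apply {ι : Type*} [Fintype ι] {g : ℝ → ℝ}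
    (hg : StrictConvexOn ℝ univ g) : StrictConvexOn ℝ univ fun y : ι → ℝ => ∑ i, g (y i) := by
  refine ⟨convex_univ, fun x _ y _ hxy a b ha hb hab => ?_⟩
  obtain ⟨i₀, hi₀⟩ := Function.ne_iff.mp hxy
  simp only [Pi.add_apply, Pi.smul_apply, Finset.smul_sum, ← Finset.sum_add_distrib]
  exact Finset.sum_lt_sum (fun i _ => hg.convexOn.2 trivial trivial ha.le hb.le hab)
    ⟨i₀, Finset.mem_univ _, hg.2 trivial trivial hi₀ ha hb hab⟩

theorem MeasureTheory.Measure.ext_of_forall_lipschitz_integral_eq {E : Type*}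
    [PseudoEMetricSpace E] [MeasurableSpace E] [BorelSpace E] {μ ν : Measure E}
    [IsProbabilityMeasure μ] [IsProbabilityMeasure ν]
    (h : ∀ f : E → ℝ, (∃ C, ∀ x y, dist (f x) (f y) ≤ C) → (∃ L, LipschitzWith L f) →
      ∫ x, f x ∂μ = ∫ x, f x ∂ν) :
    μ = ν := by
  let P : ProbabilityMeasure E := ⟨μ, inferInstance⟩
  let Q : ProbabilityMeasure E := ⟨ν, inferInstance⟩
  -- weak convergence of the constant sequence `P` to `Q`, which forces `P = Q`
  have : Tendsto (fun _ : ℕ => P) atTop (𝓝 Q) :=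
    tendsto_iff_forall_lipschitz_integral_tendsto.2 fun f hfC hfL => by
      simp [P, Q, h f hfC hfL]
  exact congrArg ProbabilityMeasure.toMeasure (tendsto_nhds_unique tendsto_const_nhds this)

theorem Continuous.integrable_comp_of_norm_le {Ω E : Type*} [MeasurableSpace Ω] {μ : Measure Ω}
    [IsFiniteMeasure μ] [NormedAddCommGroup E] [ProperSpace E] [MeasurableSpace E]
    [OpensMeasurableSpace E] {g : E → ℝ} (hg : Continuous g) {X : Ω → E} (hX : Measurable X)
    {C : ℝ} (hXC : ∀ ω, ‖X ω‖ ≤ C) : Integrable (fun ω => g (X ω)) μ := by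
  obtain ⟨B, hB⟩ := (isCompact_closedBall (0 : E) C).exists_bound_of_continuousOn hg.continuousOn
  exact .of_bound (hg.measurable.comp hX).aestronglyMeasurable B
    (.of_forall fun ω => hB _ (mem_closedBall_zero_iff.2 (hXC ω)))

namespace ConcaveDom

variable {Ω : Type*} [MeasurableSpace Ω] {μ : Measure Ω} [IsProbabilityMeasure μ] {d : ℕ}
  {X Y : Ω → Fin d → ℝ} {CX CY : ℝ} {φ : (Fin d → ℝ) → ℝ}

theorem integral_le_of_integral_strictConvexOn_eq (hdom : ConcaveDom μ X Y)
    (hXm : Measurable X) (hYm : Measurable Y) (hXb : ∀ ω, ‖X ω‖ ≤ CX) (hYb : ∀ ω, ‖Y ω‖ ≤ CY)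
    (hφ : StrictConvexOn ℝ univ φ) (heq : ∫ ω, φ (X ω) ∂μ = ∫ ω, φ (Y ω) ∂μ)
    {f : (Fin d → ℝ) → ℝ} {L : NNReal} (hfL : LipschitzWith L f) {C : ℝ}
    (hfC : ∀ x y, dist (f x) (f y) ≤ C) :
    ∫ ω, f (X ω) ∂μ ≤ ∫ ω, f (Y ω) ∂μ := by
  have hR : 0 ≤ CX := (norm_nonneg _).trans (hXb (nonempty_of_isProbabilityMeasure μ).some)
  have iX {g : (Fin d → ℝ) → ℝ} (hg : Continuous g) : Integrable (fun ω => g (X ω)) μ :=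
    hg.integrable_comp_of_norm_le hXm hXb
  have iY {g : (Fin d → ℝ) → ℝ} (hg : Continuous g) : Integrable (fun ω => g (Y ω)) μ :=
    hg.integrable_comp_of_norm_le hYm hYb
  have hφc := hφ.convexOn.locallyLipschitz.continuous
  have hfc := hfL.continuous
  refine le_of_forall_pos_le_add fun ε hε => ?_
  obtain ⟨t, ht, F, hF, hFle, hleF⟩ := hφ.exists_convexOn_sandwich hfL hfC hR hε
  have hFc := hF.locallyLipschitz.continuous
  have hiX : Integrable (fun ω => φ (X ω) + t * f (X ω)) μ := (iX hφc).add ((iX hfc).const_mul t)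
  have hiY : Integrable (fun ω => φ (Y ω) + t * f (Y ω)) μ := (iY hφc).add ((iY hfc).const_mul t)
  have : ∫ ω, φ (X ω) ∂μ + t * ∫ ω, f (X ω) ∂μ - t * ε ≤
      ∫ ω, φ (Y ω) ∂μ + t * ∫ ω, f (Y ω) ∂μ := calc
    _ = ∫ ω, (φ (X ω) + t * f (X ω) - t * ε) ∂μ := by
      rw [integral_sub hiX (integrable_const _),
        integral_add (iX hφc) ((iX hfc).const_mul t), integral_const_mul, integral_const]
      simp
    _ ≤ ∫ ω, F (X ω) ∂μ := integral_mono (hiX.sub (integrable_const _)) (iX hFc)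
      fun ω => hleF _ (mem_closedBall_zero_iff.2 (hXb ω))
    _ ≤ ∫ ω, F (Y ω) ∂μ := hdom F hF
    _ ≤ ∫ ω, (φ (Y ω) + t * f (Y ω)) ∂μ :=
      integral_mono (iY hFc) hiY fun ω => hFle _
    _ = ∫ ω, φ (Y ω) ∂μ + t * ∫ ω, f (Y ω) ∂μ := by
      rw [integral_add (iY hφc) ((iY hfc).const_mul t), integral_const_mul]
  rw [heq] at this
  nlinarith

theorem map_eq_of_integral_strictConvexOn_eq (hdom : ConcaveDom μ X Y)
    (hXm : Measurable X) (hYm : Measurable Y) (hXb : ∀ ω, ‖X ω‖ ≤ CX) (hYb : ∀ ω, ‖Y ω‖ ≤ CY)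
    (hφ : StrictConvexOn ℝ univ φ) (heq : ∫ ω, φ (X ω) ∂μ = ∫ ω, φ (Y ω) ∂μ) :
    μ.map X = μ.map Y := by
  have := Measure.isProbabilityMeasure_map (μ := μ) hXm.aemeasurable
  have := Measure.isProbabilityMeasure_map (μ := μ) hYm.aemeasurable
  refine Measure.ext_of_forall_lipschitz_integral_eq fun f ⟨C, hfC⟩ ⟨L, hfL⟩ => ?_
  rw [integral_map hXm.aemeasurable hfL.continuous.aestronglyMeasurable,
    integral_map hYm.aemeasurable hfL.continuous.aestronglyMeasurable]
  refine le_antisymm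
    (hdom.integral_le_of_integral_strictConvexOn_eq hXm hYm hXb hYb hφ heq hfL hfC) ?_
  have := hdom.integral_le_of_integral_strictConvexOn_eq hXm hYm hXb hYb hφ heq hfL.neg
    (C := C) fun x y => by simpa only [Pi.neg_apply, dist_neg_neg] using hfC x y
  simpa only [Pi.neg_apply, integral_neg, neg_le_neg_iff] using this

theorem integral_lt_of_map_ne (hdom : ConcaveDom μ X Y)
    (hXm : Measurable X) (hYm : Measurable Y) (hXb : ∀ ω, ‖X ω‖ ≤ CX) (hYb : ∀ ω, ‖Y ω‖ ≤ CY)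
    (hne : μ.map X ≠ μ.map Y) (hφ : StrictConvexOn ℝ univ φ) :
    ∫ ω, φ (X ω) ∂μ < ∫ ω, φ (Y ω) ∂μ :=
  (hdom φ hφ.convexOn).lt_of_ne fun heq =>
    hne (hdom.map_eq_of_integral_strictConvexOn_eq hXm hYm hXb hYb hφ heq)

end ConcaveDom

/-- equivalence of the three characterizations of strict dominance. -/
theorem stmt3 {Ω : Type*} [MeasurableSpace Ω] (μ : Measure Ω) [IsProbabilityMeasure μ]
    {d : ℕ} (X Y : Ω → (Fin d → ℝ))
    (hXm : Measurable X) (hYm : Measurable Y)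
    (hXb : ∃ C, ∀ ω, ‖X ω‖ ≤ C) (hYb : ∃ C, ∀ ω, ‖Y ω‖ ≤ C) :
    ((ConcaveDom μ X Y ∧ ∃ φ : (Fin d → ℝ) → ℝ, ConvexOn ℝ Set.univ φ ∧
        ∫ ω, φ (X ω) ∂μ < ∫ ω, φ (Y ω) ∂μ) ↔
      (ConcaveDom μ X Y ∧ μ.map X ≠ μ.map Y)) ∧
    ((ConcaveDom μ X Y ∧ μ.map X ≠ μ.map Y) ↔
      (ConcaveDom μ X Y ∧ ∀ φ : (Fin d → ℝ) → ℝ,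
        StrictConvexOn ℝ Set.univ φ → Continuous φ →
          ∫ ω, φ (X ω) ∂μ < ∫ ω, φ (Y ω) ∂μ)) := by
  obtain ⟨CX, hXb⟩ := hXb
  obtain ⟨CY, hYb⟩ := hYb
  have hsame (h : μ.map X = μ.map Y) {φ : (Fin d → ℝ) → ℝ} (hφ : Continuous φ) :
      ∫ ω, φ (X ω) ∂μ = ∫ ω, φ (Y ω) ∂μ :=
    ((⟨hXm.aemeasurable, hYm.aemeasurable, h⟩ : ProbabilityTheory.IdentDistrib X Y μ μ).comp
      hφ.measurable).integral_eq
  have hsq : StrictConvexOn ℝ univ fun y : Fin d → ℝ => ∑ i, y i ^ 2 :=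
    (Even.strictConvexOn_pow even_two two_ne_zero).sum_comp_apply
  have hsqc : Continuous fun y : Fin d → ℝ => ∑ i, y i ^ 2 := by fun_prop
  refine ⟨⟨fun ⟨hdom, φ, hφ, hlt⟩ => ⟨hdom, fun h => ?_⟩, fun ⟨hdom, hne⟩ => ⟨hdom, ?_⟩⟩,
    ⟨fun ⟨hdom, hne⟩ => ⟨hdom, fun φ hφ _ => ?_⟩, fun ⟨hdom, hlt⟩ => ⟨hdom, fun h => ?_⟩⟩⟩
  · exact hlt.ne (hsame h hφ.locallyLipschitz.continuous)
  · exact ⟨_, hsq.convexOn, hdom.integral_lt_of_map_ne hXm hYm hXb hYb hne hsq⟩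
  · exact hdom.integral_lt_of_map_ne hXm hYm hXb hYb hne hφ
  · exact (hlt _ hsq hsqc).ne (hsame h hsqc)
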